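/- In the block construction above, if f has influence at most s in every coordinate (i.e., Pr_{w}[f(w) ≠ f(w ⊕ e_j)] ≤ s for every j ∈ [n']), then every vector φ in the span W of {f_z : z ∈ {0,1}^B} satisfies 2^{n−1}·I(φ) ≤ 2s·⟨φ,φ⟩, where I(φ) = max_{i∈[n]} E_{x∈{0,1}^n}|φ(x) − φ(x ⊕ e_i)|². -/

import Mathlib

open scoped BigOperators
open Complex

/-- Strings of length `n = 2Bn'`, viewed as `2B` blocks of length `n'`, indexed by
`(k,b)` with `k : Fin B`, `b : Bool`. -/
abbrev Blk (B n' : ℕ) := Fin B → Bool → (Fin n' → Bool)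

/-- Hermitian inner product on functions `{0,1}^n → ℂ` in the block encoding. -/
noncomputable def ipB {B n' : ℕ} (h g : Blk B n' → ℂ) : ℂ :=
  ∑ x : Blk B n', (starRingEnd ℂ) (h x) * g x

/-- The codeword `f_z(x) = ∏_k f(x_{k,z_k})`. -/
noncomputable def fz {B n' : ℕ} (f : (Fin n' → Bool) → ℂ) (z : Fin B → Bool)
    (x : Blk B n') : ℂ :=
  ∏ k : Fin B, f (x k (z k))

/-- Flip the `j`-th bit of a length-`n'` string. -/
def wflip {n' : ℕ} (j : Fin n') (w : Fin n' → Bool) : Fin n' → Bool :=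
  Function.update w j (!w j)

/-- Flip the bit at position `j` of block `(k,b)`. -/
def blkflip {B n' : ℕ} (k : Fin B) (b : Bool) (j : Fin n') (x : Blk B n') : Blk B n' :=
  Function.update x k (Function.update (x k) b (wflip j (x k b)))

/-- Influence of coordinate `(k,b,j)` on `φ : {0,1}^n → ℂ`, `n = 2Bn'`. -/
noncomputable def inflB {B n' : ℕ} (k : Fin B) (b : Bool) (j : Fin n')
    (φ : Blk B n' → ℂ) : ℝ :=
  (∑ x : Blk B n', ‖φ x - φ (blkflip k b j x)‖ ^ 2) / 2 ^ (2 * B * n')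

/-!
Fix a coordinate `j` of block `(k,b)` and write `y` for the remaining blocks. Each codeword `f_z`
either ignores block `(k,b)` or has `f(x_{k,b})` as a factor, so every `φ ∈ W` has the form
`φ(x) = A(y) + f(x_{k,b}) C(y)`. Flipping the bit changes `φ` by `(f(w) - f(w ⊕ e_j)) C(y)`, so the
summed squared change is `#{w | f w ≠ f(w ⊕ e_j)} · Σ|C|² ≤ s 2^{n'} Σ|C|²`. Since `f` is balanced,
`Σ_w f(w) = 0` kills the cross term of `Σ|φ|²`, whence `Σ|φ|² ≥ 2^{n'}/4 · Σ|C|²`.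
-/

section SignFunction

variable {α : Type*} {f : α → ℂ}

lemma normSq_eq_quarter (hval : ∀ w, f w = 1 / 2 ∨ f w = -(1 / 2)) (w : α) :
    normSq (f w) = 1 / 4 := by
  rcases hval w with h | h <;> simp [h, normSq_apply] <;> norm_num

variable [Fintype α]

lemma sum_eq_zero_of_balanced (hval : ∀ w, f w = 1 / 2 ∨ f w = -(1 / 2))
    (hbal : 2 * {w | f w = 1 / 2}.ncard = Fintype.card α) : ∑ w, f w = 0 := by
  classical
  have hf : ∀ w, f w = (if f w = 1 / 2 then 1 else 0) - 1 / 2 := by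
    intro w; rcases hval w with h | h <;> simp [h] <;> norm_num
  rw [Finset.sum_congr rfl fun w _ => hf w, Finset.sum_sub_distrib, Finset.sum_boole,
    Finset.sum_const, Finset.card_univ, ← hbal, Set.ncard_eq_toFinset_card', Set.toFinset_ofPred]
  simp only [nsmul_eq_mul, Nat.cast_mul, Nat.cast_ofNat]
  ring

lemma sum_normSq_sub_comp_eq_ncard (hval : ∀ w, f w = 1 / 2 ∨ f w = -(1 / 2)) (g : α → α) :
    ∑ w, normSq (f w - f (g w)) = {w | f w ≠ f (g w)}.ncard := by
  classical
  have h : ∀ w, normSq (f w - f (g w)) = if f w ≠ f (g w) then 1 else 0 := by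
    intro w
    rcases hval w with h1 | h1 <;> rcases hval (g w) with h2 | h2 <;>
      simp [h1, h2, normSq_apply] <;> norm_num
  rw [Finset.sum_congr rfl fun w _ => h w, Finset.sum_boole, Set.ncard_eq_toFinset_card',
    Set.toFinset_ofPred]

lemma sum_normSq_add_mul_of_sum_eq_zero (hf : ∑ w, f w = 0) (a c : ℂ) :
    ∑ w, normSq (a + f w * c) =
      Fintype.card α * normSq a + (∑ w, normSq (f w)) * normSq c := by
  have hcross : ∑ w, a * (starRingEnd ℂ) (f w * c) = 0 := by
    simp only [map_mul, ← Finset.sum_mul, ← Finset.mul_sum, ← map_sum, hf, map_zero, mul_zero,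
      zero_mul]
  simp only [normSq_add, normSq_mul, Finset.sum_add_distrib]
  rw [← Finset.sum_mul, ← Finset.mul_sum, ← Complex.re_sum, hcross]
  simp

end SignFunction

section Block

variable {B n' : ℕ}

abbrev BlkRest (B n' : ℕ) (k : Fin B) (b : Bool) :=
  {p : Fin B × Bool // p ≠ (k, b)} → Fin n' → Bool

def blockSplit (k : Fin B) (b : Bool) : Blk B n' ≃ (Fin n' → Bool) × BlkRest B n' k b :=
  (Equiv.curry _ _ _).symm.trans (Equiv.funSplitAt (k, b) _)

def affineInBlock (f : (Fin n' → Bool) → ℂ) (k : Fin B) (b : Bool) :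
    Submodule ℂ (Blk B n' → ℂ) where
  carrier := {φ | ∃ A C : BlkRest B n' k b → ℂ,
    ∀ w r, φ ((blockSplit k b).symm (w, r)) = A r + f w * C r}
  add_mem' := by
    rintro φ ψ ⟨A, C, h⟩ ⟨A', C', h'⟩
    exact ⟨A + A', C + C', fun w r => by simp only [Pi.add_apply, h, h']; ring⟩
  zero_mem' := ⟨0, 0, by simp⟩
  smul_mem' := by
    rintro c φ ⟨A, C, h⟩
    exact ⟨c • A, c • C, fun w r => by simp only [Pi.smul_apply, smul_eq_mul, h]; ring⟩

variable {k : Fin B} {b : Bool}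

lemma blockSplit_symm_apply (w : Fin n' → Bool) (r : BlkRest B n' k b) (k' : Fin B) (b' : Bool) :
    (blockSplit k b).symm (w, r) k' b' = if h : (k', b') = (k, b) then w else r ⟨(k', b'), h⟩ := by
  simp [blockSplit, Equiv.funSplitAt_symm_apply]

lemma blockSplit_symm_apply_self (w : Fin n' → Bool) (r : BlkRest B n' k b) :
    (blockSplit k b).symm (w, r) k b = w := by
  simp [blockSplit_symm_apply]

lemma blockSplit_symm_apply_congr {k' : Fin B} {b' : Bool} (h : (k', b') ≠ (k, b))
    (w w' : Fin n' → Bool) (r : BlkRest B n' k b) :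
    (blockSplit k b).symm (w, r) k' b' = (blockSplit k b).symm (w', r) k' b' := by
  simp [blockSplit_symm_apply, h]

lemma blkflip_blockSplit_symm (j : Fin n') (w : Fin n' → Bool) (r : BlkRest B n' k b) :
    blkflip k b j ((blockSplit k b).symm (w, r)) = (blockSplit k b).symm (wflip j w, r) := by
  funext k' b'
  rcases eq_or_ne k' k with rfl | hk
  · rcases eq_or_ne b' b with rfl | hb
    · simp [blkflip, blockSplit_symm_apply_self]
    · simp [blkflip, hb, blockSplit_symm_apply]
  · simp [blkflip, hk, blockSplit_symm_apply]

lemma fz_mem_affineInBlock (f : (Fin n' → Bool) → ℂ) (z : Fin B → Bool) :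
    fz f z ∈ affineInBlock f k b := by
  classical
  by_cases hz : z k = b
  · refine ⟨0, fun r => ∏ k' ∈ Finset.univ.erase k,
      f ((blockSplit k b).symm (default, r) k' (z k')), fun w r => ?_⟩
    rw [fz, ← Finset.mul_prod_erase _ _ (Finset.mem_univ k), hz, blockSplit_symm_apply_self,
      Pi.zero_apply, zero_add]
    refine congrArg _ (Finset.prod_congr rfl fun k' hk' => congrArg f ?_)
    exact blockSplit_symm_apply_congr
      (fun h => Finset.ne_of_mem_erase hk' (congrArg Prod.fst h)) _ _ _
  · refine ⟨fun r => fz f z ((blockSplit k b).symm (default, r)), 0, fun w r => ?_⟩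
    rw [Pi.zero_apply, mul_zero, add_zero]
    refine Finset.prod_congr rfl fun k' _ => congrArg f (blockSplit_symm_apply_congr ?_ _ _ _)
    intro h
    obtain ⟨rfl, hb⟩ := Prod.mk.inj h
    exact hz hb

lemma span_fz_le_affineInBlock (f : (Fin n' → Bool) → ℂ) :
    Submodule.span ℂ (Set.range (fz f)) ≤ affineInBlock (B := B) f k b :=
  Submodule.span_le.mpr (Set.range_subset_iff.mpr fun z => fz_mem_affineInBlock f z)

variable {f : (Fin n' → Bool) → ℂ} {φ : Blk B n' → ℂ} {A C : BlkRest B n' k b → ℂ}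

lemma sum_normSq_sub_blkflip (hφ : ∀ w r, φ ((blockSplit k b).symm (w, r)) = A r + f w * C r)
    (j : Fin n') :
    ∑ x, normSq (φ x - φ (blkflip k b j x)) =
      (∑ w, normSq (f w - f (wflip j w))) * ∑ r, normSq (C r) := by
  rw [← (blockSplit k b).symm.sum_comp, Fintype.sum_prod_type, Finset.sum_mul_sum]
  refine Finset.sum_congr rfl fun w _ => Finset.sum_congr rfl fun r _ => ?_
  rw [blkflip_blockSplit_symm, hφ, hφ, ← normSq_mul]
  ring_nf

lemma sum_normSq_mul_le_sum_normSq
    (hφ : ∀ w r, φ ((blockSplit k b).symm (w, r)) = A r + f w * C r) (hf : ∑ w, f w = 0) :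
    (∑ w, normSq (f w)) * ∑ r, normSq (C r) ≤ ∑ x, normSq (φ x) := by
  rw [← (blockSplit k b).symm.sum_comp, Fintype.sum_prod_type, Finset.sum_comm, Finset.mul_sum]
  refine Finset.sum_le_sum fun r _ => ?_
  simp only [hφ, sum_normSq_add_mul_of_sum_eq_zero hf]
  exact le_add_of_nonneg_left (mul_nonneg (Nat.cast_nonneg _) (normSq_nonneg _))

end Block

lemma two_pow_pred_mul_inflB {B n' : ℕ} (k : Fin B) (b : Bool) (j : Fin n') (φ : Blk B n' → ℂ) :
    2 ^ (2 * B * n' - 1) * inflB k b j φ = (∑ x, ‖φ x - φ (blkflip k b j x)‖ ^ 2) / 2 := by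
  obtain ⟨m, hm⟩ : ∃ m, 2 * B * n' = m + 1 :=
    Nat.exists_eq_succ_of_ne_zero (by have := k.pos; have := j.pos; positivity)
  rw [inflB, hm, Nat.add_sub_cancel, pow_succ]
  field_simp

lemma sum_norm_sub_blkflip_sq_le {B n' : ℕ} {f : (Fin n' → Bool) → ℂ}
    (hval : ∀ w, f w = 1 / 2 ∨ f w = -(1 / 2)) (hf : ∑ w, f w = 0) {s : ℝ} {j : Fin n'}
    (hs : (({w | f w ≠ f (wflip j w)}.ncard : ℝ)) / 2 ^ n' ≤ s)
    {φ : Blk B n' → ℂ} (hφ : φ ∈ Submodule.span ℂ (Set.range (fz f))) (k : Fin B) (b : Bool) :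
    ∑ x, ‖φ x - φ (blkflip k b j x)‖ ^ 2 ≤ 4 * s * ∑ x, ‖φ x‖ ^ 2 := by
  obtain ⟨A, C, hAC⟩ := span_fz_le_affineInBlock (k := k) (b := b) f hφ
  have hflips : ∑ w, normSq (f w - f (wflip j w)) ≤ s * 2 ^ n' := by
    rw [sum_normSq_sub_comp_eq_ncard hval]
    exact (div_le_iff₀ (by positivity)).mp hs
  have hsq : ∑ w, normSq (f w) = 2 ^ n' / 4 := by
    simp only [normSq_eq_quarter hval, Finset.sum_const, Finset.card_univ, Fintype.card_fun,
      Fintype.card_bool, Fintype.card_fin, nsmul_eq_mul]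
    push_cast
    ring
  have hs0 : 0 ≤ s := (div_nonneg (Nat.cast_nonneg _) (by positivity)).trans hs
  simp only [Complex.sq_norm]
  rw [sum_normSq_sub_blkflip hAC]
  calc _ ≤ s * 2 ^ n' * ∑ r, normSq (C r) :=
        mul_le_mul_of_nonneg_right hflips (Finset.sum_nonneg fun r _ => normSq_nonneg _)
    _ = 4 * s * ((∑ w, normSq (f w)) * ∑ r, normSq (C r)) := by
        rw [hsq]; ring
    _ ≤ 4 * s * ∑ x, normSq (φ x) :=
        mul_le_mul_of_nonneg_left (sum_normSq_mul_le_sum_normSq hAC hf) (by positivity)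

theorem stmt6_general {B n' : ℕ}
    (f : (Fin n' → Bool) → ℂ)
    (hval : ∀ w, f w = 1 / 2 ∨ f w = -(1 / 2))
    (hbal : {w | f w = 1 / 2}.ncard = 2 ^ (n' - 1))
    (s : ℝ)
    (hs : ∀ j : Fin n', (({w | f w ≠ f (wflip j w)}.ncard : ℝ)) / 2 ^ n' ≤ s) :
    ∀ φ ∈ Submodule.span ℂ (Set.range (fz f)),
      ∀ (k : Fin B) (b : Bool) (j : Fin n'),
        2 ^ (2 * B * n' - 1) * inflB k b j φ ≤
          2 * s * ∑ x : Blk B n', ‖φ x‖ ^ 2 := by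
  intro φ hφ k b j
  have hf : ∑ w, f w = 0 := sum_eq_zero_of_balanced hval (by
    rw [hbal, Fintype.card_fun, Fintype.card_bool, Fintype.card_fin, ← pow_succ',
      Nat.sub_add_cancel j.pos])
  rw [two_pow_pred_mul_inflB]
  linarith [sum_norm_sub_blkflip_sq_le hval hf (hs j) hφ k b]

/-- if each coordinate of `f` has influence at most `s`, then every
`φ` in `W = span{f_z}` satisfies `2^{n-1} I(φ) ≤ 2s ⟨φ,φ⟩`, i.e. the bound holds
for every coordinate `i = (k,b,j)` of `{0,1}^n`, `n = 2Bn'`. -/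
theorem stmt6 {B n' : ℕ} (hn' : 0 < n')
    (f : (Fin n' → Bool) → ℂ)
    (hval : ∀ w, f w = 1 / 2 ∨ f w = -(1 / 2))
    (hbal : {w | f w = 1 / 2}.ncard = 2 ^ (n' - 1))
    (s : ℝ)
    (hs : ∀ j : Fin n', (({w | f w ≠ f (wflip j w)}.ncard : ℝ)) / 2 ^ n' ≤ s) :
    ∀ φ ∈ Submodule.span ℂ (Set.range (fz f)),
      ∀ (k : Fin B) (b : Bool) (j : Fin n'),
        2 ^ (2 * B * n' - 1) * inflB k b j φ ≤
          2 * s * ∑ x : Blk B n', ‖φ x‖ ^ 2 :=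
  stmt6_general f hval hbal s hs
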